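/- Let G = (V, E, w) be a connected weighted graph with positive edge weights and let T = (V, F, w) be a spanning tree of G, with Laplacians L_G and L_T respectively. Let M be the Moore–Penrose pseudoinverse of L_T. Then trace(L_G · M) = st_T(G), the stretch of G with respect to T. -/

import Mathlib

/-!
For an edge `uv` of `G` with `χ = ψ_u - ψ_v`, `trace (w(uv) L_{uv} M) = w(uv) χᵀ M χ`.
If `L_T y = χ`, then `χᵀ M χ = yᵀ L_T M L_T y = yᵀ L_T y = χᵀ y = y u - y v`.
Such a `y` is the sum, over the edges `ab` of the tree path from `u` to `v`, of `1 / w(ab)` times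
the indicator of the side of `a` in `T - ab`: only `ab` crosses that cut, so its Laplacian
is `ψ_a - ψ_b`, and the sum telescopes to `χ`. Along the path, `y u - y v` collects exactly
`Σ 1 / w(ab)`, the resistance of the path.
-/

open Matrix

/-- The rank-one Laplacian contribution `(ψ_u - ψ_v)(ψ_u - ψ_v)ᵀ` of an edge,
as a function on unordered pairs. -/
noncomputable def edgeLap {V : Type*} [DecidableEq V] : Sym2 V → Matrix V V ℝ :=
  Sym2.lift ⟨fun u v =>
      Matrix.vecMulVec (Pi.single u 1 - Pi.single v 1) (Pi.single u 1 - Pi.single v 1),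
    by
      intro u v
      ext i j
      simp [Matrix.vecMulVec]
      ring⟩

/-- The Laplacian of a weighted graph: `L_G = Σ_{e∈E} w(e) (ψ_u - ψ_v)(ψ_u - ψ_v)ᵀ`. -/
noncomputable def lapW {V : Type*} [Fintype V] [DecidableEq V]
    (G : SimpleGraph V) [DecidableRel G.Adj] (w : Sym2 V → ℝ) : Matrix V V ℝ :=
  ∑ e ∈ G.edgeFinset, w e • edgeLap e

/-- The sum `Σ_i 1 / w(e_i)` over the edges `e_1, …, e_k` of the unique simple path in the
tree `T` from `u` to `v`. -/
noncomputable def treePathWeight {V : Type*} (T : SimpleGraph V) (hT : T.IsTree)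
    (w : Sym2 V → ℝ) (u v : V) : ℝ :=
  (((hT.existsUnique_path u v).choose.edges).map fun e => 1 / w e).sum

lemma treePathWeight_symm {V : Type*} (T : SimpleGraph V) (hT : T.IsTree)
    (w : Sym2 V → ℝ) (u v : V) :
    treePathWeight T hT w u v = treePathWeight T hT w v u := by
  have h1 := (hT.existsUnique_path u v).choose_spec
  have h2 := (hT.existsUnique_path v u).choose_spec
  have hrev : (hT.existsUnique_path u v).choose.reverse = (hT.existsUnique_path v u).choose :=
    h2.2 _ h1.1.reverse
  unfold treePathWeight
  rw [← hrev, SimpleGraph.Walk.edges_reverse, List.map_reverse, List.sum_reverse]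

/-- The stretch `st_T(e) = w(e) · Σ_i 1 / w(e_i)` of an unordered pair `e`, where
`e_1, …, e_k` are the edges of the unique simple path in `T` joining the endpoints of `e`. -/
noncomputable def stretchEdge {V : Type*} (T : SimpleGraph V) (hT : T.IsTree)
    (w : Sym2 V → ℝ) : Sym2 V → ℝ :=
  Sym2.lift ⟨fun u v => w s(u, v) * treePathWeight T hT w u v,
    by
      intro u v
      simp only []
      rw [Sym2.eq_swap, treePathWeight_symm]⟩

/-- The stretch of `G` with respect to the spanning tree `T`:
`st_T(G) = Σ_{e∈E} st_T(e)`. -/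
noncomputable def stretch {V : Type*} [Fintype V] [DecidableEq V]
    (G : SimpleGraph V) [DecidableRel G.Adj] (T : SimpleGraph V) (hT : T.IsTree)
    (w : Sym2 V → ℝ) : ℝ :=
  ∑ e ∈ G.edgeFinset, stretchEdge T hT w e

open SimpleGraph

section MatrixFacts

variable {R n : Type*} [CommSemiring R] [Fintype n]

theorem Matrix.trace_vecMulVec_mul (a b : n → R) (M : Matrix n n R) :
    (vecMulVec a b * M).trace = b ⬝ᵥ (M *ᵥ a) := by
  rw [vecMulVec_mul, trace_vecMulVec, dotProduct_comm, dotProduct_mulVec]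

theorem Matrix.IsSymm.dotProduct_mulVec_of_mul_mul_self {L M : Matrix n n R} (hL : L.IsSymm)
    (hLML : L * M * L = L) {x y : n → R} (hy : L *ᵥ y = x) :
    x ⬝ᵥ (M *ᵥ x) = x ⬝ᵥ y :=
  calc x ⬝ᵥ (M *ᵥ x) = (y ᵥ* L) ⬝ᵥ (M *ᵥ (L *ᵥ y)) := by
        rw [← mulVec_transpose, hL.eq, hy]
    _ = y ⬝ᵥ ((L * M * L) *ᵥ y) := by rw [← dotProduct_mulVec, mulVec_mulVec, mulVec_mulVec]
    _ = x ⬝ᵥ y := by rw [hLML, hy, dotProduct_comm]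

end MatrixFacts

namespace SimpleGraph.IsTree

variable {V : Type*} {T : SimpleGraph V} (hT : T.IsTree)

noncomputable def path (u v : V) : T.Walk u v := (hT.existsUnique_path u v).choose

theorem path_isPath (u v : V) : (hT.path u v).IsPath :=
  (hT.existsUnique_path u v).choose_spec.1

theorem path_eq {u v : V} {p : T.Walk u v} (hp : p.IsPath) : hT.path u v = p :=
  ((hT.existsUnique_path u v).choose_spec.2 p hp).symm

theorem edges_path_self (v : V) : (hT.path v v).edges = [] := by
  rw [hT.path_eq Walk.IsPath.nil, Walk.edges_nil]

theorem edges_path_of_adj {a b : V} (hab : T.Adj a b) : (hT.path a b).edges = [s(a, b)] := by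
  rw [hT.path_eq (Walk.IsPath.nil.cons (h := hab) (by simpa using hab.ne)), Walk.edges_cons,
    Walk.edges_nil]

theorem edges_path_of_adj_or {z c : V} (hzc : T.Adj z c) (b : V) :
    (hT.path z b).edges = s(z, c) :: (hT.path c b).edges ∨
      (hT.path c b).edges = s(z, c) :: (hT.path z b).edges := by
  classical
  by_cases hz : z ∈ (hT.path c b).support
  · right
    have htake : (hT.path c b).takeUntil z hz = Walk.cons hzc.symm Walk.nil := by
      rw [← hT.path_eq ((hT.path_isPath c b).takeUntil hz),
        hT.path_eq (Walk.IsPath.nil.cons (h := hzc.symm) (by simpa using hzc.ne'))]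
    have hdrop : (hT.path c b).dropUntil z hz = hT.path z b :=
      (hT.path_eq ((hT.path_isPath c b).dropUntil hz)).symm
    rw [← (hT.path c b).take_spec hz, Walk.edges_append, htake, hdrop]
    simp [Sym2.eq_swap]
  · left
    rw [hT.path_eq ((hT.path_isPath c b).cons hz (h := hzc)), Walk.edges_cons]

theorem mem_edges_path_iff_of_adj {z c : V} (hzc : T.Adj z c) (b : V) {e : Sym2 V}
    (he : e ≠ s(z, c)) : e ∈ (hT.path z b).edges ↔ e ∈ (hT.path c b).edges := by
  rcases hT.edges_path_of_adj_or hzc b with h | h <;> simp [h, he]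

end SimpleGraph.IsTree

section Laplacian

variable {V : Type*} [DecidableEq V]

def edgeVec {R : Type*} [Ring R] (u v : V) : V → R := Pi.single u 1 - Pi.single v 1

theorem edgeVec_self {R : Type*} [Ring R] (v : V) : (edgeVec v v : V → R) = 0 :=
  sub_self _

theorem edgeVec_add_edgeVec {R : Type*} [Ring R] (u x v : V) :
    (edgeVec u x + edgeVec x v : V → R) = edgeVec u v := by
  simp only [edgeVec, sub_add_sub_cancel]

theorem edgeVec_dotProduct {R : Type*} [Ring R] [Fintype V] (u v : V) (y : V → R) :
    edgeVec u v ⬝ᵥ y = y u - y v := by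
  simp [edgeVec, sub_dotProduct]

theorem edgeLap_mk (u v : V) : edgeLap s(u, v) = vecMulVec (edgeVec u v) (edgeVec u v) :=
  rfl

theorem edgeLap_mulVec [Fintype V] (u v : V) (y : V → ℝ) :
    edgeLap s(u, v) *ᵥ y = (y u - y v) • edgeVec u v := by
  rw [edgeLap_mk, vecMulVec_mulVec, op_smul_eq_smul, edgeVec_dotProduct]

theorem edgeLap_transpose (e : Sym2 V) : (edgeLap e)ᵀ = edgeLap e := by
  induction e using Sym2.ind with
  | _ u v => rw [edgeLap_mk, transpose_vecMulVec]

variable [Fintype V]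

theorem lapW_isSymm (G : SimpleGraph V) [DecidableRel G.Adj] (w : Sym2 V → ℝ) :
    (lapW G w).IsSymm := by
  simp only [IsSymm, lapW, transpose_sum, transpose_smul, edgeLap_transpose]

theorem lapW_mulVec (G : SimpleGraph V) [DecidableRel G.Adj] (w : Sym2 V → ℝ) (y : V → ℝ) :
    lapW G w *ᵥ y = ∑ e ∈ G.edgeFinset, w e • (edgeLap e *ᵥ y) := by
  simp only [lapW, sum_mulVec, smul_mulVec]

end Laplacian

section Potential

variable {V : Type*} [DecidableEq V] {T : SimpleGraph V} (hT : T.IsTree) (w : Sym2 V → ℝ)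

/-- `1 / w(ab)` times the indicator of the side of `a` when the tree edge `ab` is deleted:
`z` lies on that side iff `ab` is on the path from `z` to `b`. -/
noncomputable def cutPotential (a b : V) : V → ℝ := fun z =>
  if s(a, b) ∈ (hT.path z b).edges then 1 / w s(a, b) else 0

theorem cutPotential_apply_of_adj {a b z c : V} (hzc : T.Adj z c) (he : s(a, b) ≠ s(z, c)) :
    cutPotential hT w a b z = cutPotential hT w a b c := by
  simp only [cutPotential, hT.mem_edges_path_iff_of_adj hzc b he]

theorem cutPotential_apply_left {a b : V} (hab : T.Adj a b) :
    cutPotential hT w a b a = 1 / w s(a, b) := by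
  simp [cutPotential, hT.edges_path_of_adj hab]

theorem cutPotential_apply_right (a b : V) : cutPotential hT w a b b = 0 := by
  simp [cutPotential, hT.edges_path_self]

noncomputable def pathPotential {u v : V} (p : T.Walk u v) : V → ℝ :=
  (p.darts.map fun d => cutPotential hT w d.fst d.snd).sum

@[simp]
theorem pathPotential_nil (v : V) : pathPotential hT w (Walk.nil : T.Walk v v) = 0 := rfl

@[simp]
theorem pathPotential_cons {u x v : V} (h : T.Adj u x) (p : T.Walk x v) :
    pathPotential hT w (Walk.cons h p) = cutPotential hT w u x + pathPotential hT w p := by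
  simp [pathPotential]

theorem pathPotential_apply_of_adj {x v : V} (p : T.Walk x v) {z c : V} (hzc : T.Adj z c)
    (hp : s(z, c) ∉ p.edges) : pathPotential hT w p z = pathPotential hT w p c := by
  induction p with
  | nil => rfl
  | cons h q ih =>
    rw [Walk.edges_cons, List.mem_cons, not_or] at hp
    rw [pathPotential_cons, Pi.add_apply, Pi.add_apply,
      cutPotential_apply_of_adj hT w hzc (Ne.symm hp.1), ih hp.2]

theorem pathPotential_sub_of_isPath {u v : V} (p : T.Walk u v) (hp : p.IsPath) :
    pathPotential hT w p u - pathPotential hT w p v = (p.edges.map fun e => 1 / w e).sum := by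
  induction p with
  | nil => simp
  | @cons a b c h q ih =>
    obtain ⟨hq, ha⟩ := (Walk.cons_isPath_iff _ _).1 hp
    have hab : s(a, b) ∉ q.edges := fun hmem => ha (q.fst_mem_support_of_mem_edges hmem)
    have hc : cutPotential hT w a b c = 0 := by
      simp [cutPotential, hT.path_eq hq.reverse, hab]
    rw [pathPotential_cons, Pi.add_apply, Pi.add_apply, cutPotential_apply_left hT w h, hc,
      pathPotential_apply_of_adj hT w q h hab, Walk.edges_cons, List.map_cons, List.sum_cons,
      ← ih hq]
    ring

variable [Fintype V] [DecidableRel T.Adj]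

theorem lapW_mulVec_cutPotential {a b : V} (hab : T.Adj a b)
    (hw : w s(a, b) ≠ 0) : lapW T w *ᵥ cutPotential hT w a b = edgeVec a b := by
  rw [lapW_mulVec, Finset.sum_eq_single s(a, b)]
  · rw [edgeLap_mulVec, cutPotential_apply_left hT w hab, cutPotential_apply_right, sub_zero,
      smul_smul, mul_one_div_cancel hw, one_smul]
  · intro e he hne
    induction e using Sym2.ind with
    | _ z c => rw [edgeLap_mulVec, cutPotential_apply_of_adj hT w (mem_edgeFinset.1 he) hne.symm,
        sub_self, zero_smul, smul_zero]
  · exact fun h => absurd (mem_edgeFinset.2 hab) h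

theorem lapW_mulVec_pathPotential (hw : ∀ e ∈ T.edgeSet, w e ≠ 0)
    {u v : V} (p : T.Walk u v) : lapW T w *ᵥ pathPotential hT w p = edgeVec u v := by
  induction p with
  | nil => rw [pathPotential_nil, mulVec_zero, edgeVec_self]
  | cons h q ih =>
    rw [pathPotential_cons, mulVec_add, ih, lapW_mulVec_cutPotential hT w h (hw _ h),
      edgeVec_add_edgeVec]

end Potential

theorem trace_lap_mul_pinv_eq_stretch_general {V : Type*} [Fintype V] [DecidableEq V]
    (G T : SimpleGraph V) [DecidableRel G.Adj] [DecidableRel T.Adj]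
    (hT : T.IsTree) (hTG : T ≤ G)
    (w : Sym2 V → ℝ) (hw : ∀ e ∈ G.edgeSet, 0 < w e)
    (M : Matrix V V ℝ)
    (hM1 : lapW T w * M * lapW T w = lapW T w) :
    (lapW G w * M).trace = stretch G T hT w := by
  have hwT : ∀ e ∈ T.edgeSet, w e ≠ 0 := fun e he => (hw e (edgeSet_mono hTG he)).ne'
  rw [lapW, Finset.sum_mul, trace_sum, stretch]
  refine Finset.sum_congr rfl fun e _ => ?_
  induction e using Sym2.ind with
  | _ u v =>
    have hpot := lapW_mulVec_pathPotential hT w hwT (hT.path u v)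
    rw [smul_mul_assoc, trace_smul, edgeLap_mk, trace_vecMulVec_mul,
      (lapW_isSymm T w).dotProduct_mulVec_of_mul_mul_self hM1 hpot, edgeVec_dotProduct,
      pathPotential_sub_of_isPath hT w _ (hT.path_isPath u v)]
    rfl

/-- If `G` is a connected weighted graph with positive edge weights, `T` is a spanning tree
of `G`, and `M` is the Moore–Penrose pseudoinverse of `L_T`, then
`trace(L_G · M) = st_T(G)`. -/
theorem trace_lap_mul_pinv_eq_stretch {V : Type*} [Fintype V] [DecidableEq V]
    (G T : SimpleGraph V) [DecidableRel G.Adj] [DecidableRel T.Adj]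
    (hG : G.Connected) (hT : T.IsTree) (hTG : T ≤ G)
    (w : Sym2 V → ℝ) (hw : ∀ e ∈ G.edgeSet, 0 < w e)
    (M : Matrix V V ℝ)
    (hM1 : lapW T w * M * lapW T w = lapW T w)
    (hM2 : M * lapW T w * M = M)
    (hM3 : (lapW T w * M)ᵀ = lapW T w * M)
    (hM4 : (M * lapW T w)ᵀ = M * lapW T w) :
    (lapW G w * M).trace = stretch G T hT w :=
  trace_lap_mul_pinv_eq_stretch_general G T hT hTG w hw M hM1
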